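/- Fix an integer N > 1. Let S be a KdV subset with leading term A = {a₁ < … < a_N}, and let σ be a permutation of {1,…,N}. For i = 1,…,N define S_i = {a_{σ(1)}+i−N, a_{σ(2)}+i−N, …, a_{σ(i)}+i−N} ∪ (S+i). Then (S₁,…,S_N) is an mKdV tuple of subsets, and S_N = S. -/

import Mathlib

/-- A subset `S ⊆ ℤ` is of virtual cardinal zero if both `S \ ℤ≥0` and `ℤ≥0 \ S`
are finite and have the same cardinality. -/
def VirtualCardZero (S : Set ℤ) : Prop :=
  (S \ {n : ℤ | 0 ≤ n}).Finite ∧ ({n : ℤ | 0 ≤ n} \ S).Finite ∧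
    (S \ {n : ℤ | 0 ≤ n}).ncard = ({n : ℤ | 0 ≤ n} \ S).ncard

/-- The shift `S + k = {s + k : s ∈ S}` of a set of integers. -/
def shiftSet (S : Set ℤ) (k : ℤ) : Set ℤ := (fun s => s + k) '' S

/-- A KdV subset (for a fixed `N`): a subset `S ⊆ ℤ` of virtual cardinal zero
such that `S + N ⊆ S`. -/
def IsKdV (N : ℕ) (S : Set ℤ) : Prop :=
  VirtualCardZero S ∧ shiftSet S N ⊆ S

/-- `A` is the leading term of the KdV subset `S`: `A` is an `N`-element set with
`S = A ∪ (S+N)` and `A ∩ (S+N) = ∅`. -/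
def IsLeadingTerm (N : ℕ) (S : Set ℤ) (A : Finset ℤ) : Prop :=
  A.card = N ∧ (↑A : Set ℤ) ∪ shiftSet S N = S ∧ (↑A : Set ℤ) ∩ shiftSet S N = ∅

/-- The mutation `S[a] = {a+1−N} ∪ (S+1)` of a KdV subset `S` at an element `a`
of its leading term. -/
def mutate (N : ℕ) (S : Set ℤ) (a : ℤ) : Set ℤ :=
  {a + 1 - (N : ℤ)} ∪ shiftSet S 1

/-- An mKdV tuple of subsets: an `N`-tuple `(S₁,…,S_N)` of KdV subsets with
`S_i + 1 ⊆ S_{i+1}` for `i = 1,…,N−1` and `S_N + 1 ⊆ S₁` (i.e. cyclically). -/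
def IsMKdVTuple (N : ℕ) [NeZero N] (T : Fin N → Set ℤ) : Prop :=
  (∀ i, IsKdV N (T i)) ∧ ∀ i : Fin N, shiftSet (T i) 1 ⊆ T (i + 1)

/-- The tuple `S_{S,σ}`: given a KdV subset `S` whose leading term is enumerated
increasingly by `a : Fin N → ℤ` and a permutation `σ`, its `i`-th entry (`i` being
0-based, corresponding to the 1-based index `i+1`) is
`S_{i+1} = {a_{σ(1)}+(i+1)−N, …, a_{σ(i+1)}+(i+1)−N} ∪ (S+(i+1))`. -/
def mkTuple (N : ℕ) (S : Set ℤ) (a : Fin N → ℤ) (σ : Equiv.Perm (Fin N))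
    (i : Fin N) : Set ℤ :=
  ((fun j : Fin N => a (σ j) + ((i : ℕ) : ℤ) + 1 - (N : ℤ)) ''
      {j : Fin N | (j : ℕ) ≤ (i : ℕ)}) ∪ shiftSet S (((i : ℕ) : ℤ) + 1)


/-!
Measure a set `S ⊆ ℤ` with finite symmetric difference from `ℤ≥0` by its virtual cardinal
`|S \ ℤ≥0| - |ℤ≥0 \ S|`. Translating by `k ≥ 0` lowers it by `k`, and adjoining `m` new points
raises it by `m`. The set `S_i` is `S + i` with the `i` points `a_{σ(j)} + i - N` adjoined, and
these are new because `a_{σ(j)} ∉ S + N`; so `S_i` has virtual cardinal `0 - i + i = 0`.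
Closure under `+N` follows from `A ⊆ S` and `S + N ⊆ S`, the inclusions `S_i + 1 ⊆ S_{i+1}`
are visible from the shape of the `S_i`, and `S_N = A ∪ (S + N) = S`.
-/

open Set Function
open scoped symmDiff

section VirtualCard

variable {α : Type*} {F S T : Set α}

/-- The virtual cardinal of `S` relative to `T`, meaningful when `S ∆ T` is finite
(`ncard` of an infinite set is `0`). -/
noncomputable def virtualCard (T S : Set α) : ℤ := (S \ T).ncard - (T \ S).ncard

lemma virtualCard_swap (S T : Set α) : virtualCard S T = -virtualCard T S := by
  simp only [virtualCard]; ring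

lemma virtualCard_image {β : Type*} {f : α → β} (hf : Injective f) (T S : Set α) :
    virtualCard (f '' T) (f '' S) = virtualCard T S := by
  simp only [virtualCard, ← image_sdiff hf, ncard_image_of_injective _ hf]

lemma Set.Finite.symmDiff_union_left (hF : F.Finite) (h : (S ∆ T).Finite) :
    ((F ∪ S) ∆ T).Finite := by
  refine (hF.union h).subset fun x hx => ?_
  simp only [mem_symmDiff, mem_union] at hx ⊢
  tauto

lemma Set.Finite.symmDiff_union_right (hF : F.Finite) (h : (S ∆ T).Finite) :
    (S ∆ (F ∪ T)).Finite := by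
  rw [symmDiff_comm] at h ⊢
  exact hF.symmDiff_union_left h

lemma virtualCard_union_left (hF : F.Finite) (hFS : Disjoint F S) (h : (S ∆ T).Finite) :
    virtualCard T (F ∪ S) = virtualCard T S + F.ncard := by
  rw [Set.symmDiff_def, finite_union] at h
  have hST : (F ∪ S) \ T = F \ T ∪ S \ T := union_sdiff_distrib
  have hTS : T \ S = T \ (F ∪ S) ∪ F ∩ T := by
    ext x
    have := @disjoint_left.mp hFS x
    simp only [mem_sdiff, mem_union, mem_inter_iff]
    tauto
  have e₁ : ((F ∪ S) \ T).ncard = (F \ T).ncard + (S \ T).ncard := by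
    rw [hST]
    exact ncard_union_eq (hFS.mono sdiff_subset sdiff_subset) hF.sdiff h.1
  have e₂ : (T \ S).ncard = (T \ (F ∪ S)).ncard + (F ∩ T).ncard := by
    rw [hTS]
    exact ncard_union_eq
      (disjoint_sdiff_left.mono_right (inter_subset_left.trans subset_union_left))
      (h.2.subset (sdiff_subset_sdiff_right subset_union_right)) (hF.inter_of_left T)
  have e₃ := ncard_inter_add_ncard_sdiff_eq_ncard F T hF
  simp only [virtualCard]
  omega

lemma virtualCard_union_right (hF : F.Finite) (hFT : Disjoint F T) (h : (S ∆ T).Finite) :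
    virtualCard (F ∪ T) S = virtualCard T S - F.ncard := by
  rw [virtualCard_swap, virtualCard_union_left hF hFT (symmDiff_comm S T ▸ h), virtualCard_swap T]
  ring

end VirtualCard

section Shift

variable {S : Set ℤ}

lemma mem_shiftSet {k x : ℤ} : x ∈ shiftSet S k ↔ x - k ∈ S := by
  constructor
  · rintro ⟨s, hs, rfl⟩
    simpa
  · exact fun h => ⟨x - k, h, sub_add_cancel x k⟩

lemma virtualCardZero_iff :
    VirtualCardZero S ↔ (S ∆ Ici 0).Finite ∧ virtualCard (Ici 0) S = 0 := by
  simp only [VirtualCardZero, virtualCard, Set.symmDiff_def, finite_union, sub_eq_zero,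
    Nat.cast_inj, and_assoc]
  rfl

lemma Ici_zero_eq_image_add (k : ℤ) : Ici (0 : ℤ) = (· + k) '' Ici (-k) := by
  rw [image_add_const_Ici, neg_add_cancel]

lemma Ici_neg_natCast_eq_union (k : ℕ) : Ici (-(k : ℤ)) = Ico (-(k : ℤ)) 0 ∪ Ici 0 :=
  (Ico_union_Ici_eq_Ici (neg_nonpos.2 k.cast_nonneg)).symm

lemma Set.Finite.symmDiff_shiftSet_Ici (h : (S ∆ Ici 0).Finite) (k : ℕ) :
    (shiftSet S k ∆ Ici 0).Finite := by
  rw [shiftSet, Ici_zero_eq_image_add k, ← image_symmDiff (add_left_injective _),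
    Ici_neg_natCast_eq_union]
  exact ((finite_Ico _ _).symmDiff_union_right h).image _

lemma virtualCard_Ici_shiftSet (h : (S ∆ Ici 0).Finite) (k : ℕ) :
    virtualCard (Ici 0) (shiftSet S k) = virtualCard (Ici 0) S - k := by
  have hdisj : Disjoint (Ico (-(k : ℤ)) 0) (Ici 0) :=
    (Iio_disjoint_Ici le_rfl).mono_left Ico_subset_Iio_self
  rw [shiftSet, Ici_zero_eq_image_add k, virtualCard_image (add_left_injective _),
    Ici_neg_natCast_eq_union, virtualCard_union_right (finite_Ico _ _) hdisj h,
    ← Finset.coe_Ico, ncard_coe_finset, Int.card_Ico]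
  simp

end Shift

section Tuple

variable {N : ℕ} {S : Set ℤ} {A : Finset ℤ} {a : Fin N → ℤ}

lemma IsLeadingTerm.subset (hA : IsLeadingTerm N S A) : (A : Set ℤ) ⊆ S :=
  hA.2.1 ▸ subset_union_left

lemma IsLeadingTerm.sub_notMem (hA : IsLeadingTerm N S A) {x : ℤ} (hx : x ∈ A) : x - N ∉ S :=
  fun h => (eq_empty_iff_forall_notMem.mp hA.2.2) x ⟨hx, mem_shiftSet.2 h⟩

lemma virtualCardZero_mkTuple (hS : VirtualCardZero S) (ha : Injective a)
    (haS : ∀ j, a j - N ∉ S) (σ : Equiv.Perm (Fin N)) (i : Fin N) :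
    VirtualCardZero (mkTuple N S a σ i) := by
  set f := fun j : Fin N => a (σ j) + ((i : ℕ) : ℤ) + 1 - (N : ℤ)
  have hf : Injective f := fun j j' h => σ.injective (ha (by simpa [f] using h))
  have hcard : (f '' Iic i).ncard = (i : ℕ) + 1 := by
    rw [ncard_image_of_injective _ hf, ← Finset.coe_Iic, ncard_coe_finset, Fin.card_Iic]
  have hdisj : Disjoint (f '' Iic i) (shiftSet S ((i : ℕ) + 1 : ℕ)) := by
    refine disjoint_left.2 ?_
    rintro _ ⟨j, -, rfl⟩ h
    refine haS (σ j) ?_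
    convert mem_shiftSet.1 h using 1
    simp only [f]
    push_cast
    ring
  rw [virtualCardZero_iff] at hS ⊢
  have hshift : mkTuple N S a σ i = f '' Iic i ∪ shiftSet S ((i : ℕ) + 1 : ℕ) := by
    rw [mkTuple, Nat.cast_succ]
    rfl
  rw [hshift, virtualCard_union_left (toFinite _) hdisj (hS.1.symmDiff_shiftSet_Ici _),
    virtualCard_Ici_shiftSet hS.1, hS.2, hcard]
  exact ⟨(toFinite _).symmDiff_union_left (hS.1.symmDiff_shiftSet_Ici _), by push_cast; ring⟩

lemma shiftSet_mkTuple_subset (hSN : shiftSet S N ⊆ S) (haS : ∀ j, a j ∈ S)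
    (σ : Equiv.Perm (Fin N)) (i : Fin N) :
    shiftSet (mkTuple N S a σ i) N ⊆ mkTuple N S a σ i := by
  rintro _ ⟨x, ⟨j, -, rfl⟩ | hx, rfl⟩
  · refine Or.inr (mem_shiftSet.2 ?_)
    convert haS (σ j) using 1
    ring
  · refine Or.inr (mem_shiftSet.2 (hSN (mem_shiftSet.2 ?_)))
    convert mem_shiftSet.1 hx using 1
    ring

lemma isKdV_mkTuple (hS : IsKdV N S) (hA : IsLeadingTerm N S A) (ha : Injective a)
    (haA : (A : Set ℤ) = range a) (σ : Equiv.Perm (Fin N)) (i : Fin N) :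
    IsKdV N (mkTuple N S a σ i) :=
  have haA' (j : Fin N) : a j ∈ A := by simp [← Finset.mem_coe, haA]
  ⟨virtualCardZero_mkTuple hS.1 ha (fun j => hA.sub_notMem (haA' j)) σ i,
    shiftSet_mkTuple_subset hS.2 (fun j => hA.subset (haA' j)) σ i⟩

end Tuple

section Cyclic

variable {n : ℕ} {S : Set ℤ} {a : Fin (n + 1) → ℤ}

lemma shiftSet_mkTuple_castSucc_subset (σ : Equiv.Perm (Fin (n + 1))) (i : Fin n) :
    shiftSet (mkTuple (n + 1) S a σ i.castSucc) 1 ⊆ mkTuple (n + 1) S a σ i.succ := by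
  rintro _ ⟨x, ⟨j, hj, rfl⟩ | hx, rfl⟩
  · refine Or.inl ⟨j, ?_, ?_⟩
    · simp only [mem_ofPred_eq, Fin.val_castSucc, Fin.val_succ] at hj ⊢
      omega
    · simp only [Fin.val_castSucc, Fin.val_succ]
      push_cast
      ring
  · refine Or.inr (mem_shiftSet.2 ?_)
    convert mem_shiftSet.1 hx using 1
    simp only [Fin.val_castSucc, Fin.val_succ]
    push_cast
    ring

lemma shiftSet_one_subset_mkTuple_zero (σ : Equiv.Perm (Fin (n + 1))) :
    shiftSet S 1 ⊆ mkTuple (n + 1) S a σ 0 := by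
  rw [mkTuple, Fin.val_zero, Nat.cast_zero, zero_add]
  exact subset_union_right

lemma mkTuple_last {A : Finset ℤ} (hA : IsLeadingTerm (n + 1) S A)
    (haA : (A : Set ℤ) = range a) (σ : Equiv.Perm (Fin (n + 1))) :
    mkTuple (n + 1) S a σ (Fin.last n) = S := by
  have huniv : {j : Fin (n + 1) | (j : ℕ) ≤ n} = univ :=
    eq_univ_of_forall fun j => Nat.lt_succ_iff.1 j.2
  have hf : (fun j : Fin (n + 1) => a (σ j) + (n : ℤ) + 1 - ((n + 1 : ℕ) : ℤ)) = a ∘ σ := by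
    ext j
    simp only [comp_apply]
    push_cast
    ring
  rw [mkTuple, Fin.val_last, huniv, image_univ, hf, EquivLike.range_comp, ← haA,
    ← Nat.cast_succ]
  exact hA.2.1

end Cyclic

/-- Fix `N > 1`.  Let `S` be a KdV subset with leading term
`A = {a₁ < … < a_N}` and let `σ` be a permutation of `{1,…,N}`.  For `i = 1,…,N` set
`S_i = {a_{σ(1)}+i−N, …, a_{σ(i)}+i−N} ∪ (S+i)`.  Then `(S₁,…,S_N)` is an mKdV tuple
of subsets and `S_N = S`. -/
theorem mkTuple_isMKdV (N : ℕ) [NeZero N] (hN : 1 < N) (S : Set ℤ) (hS : IsKdV N S)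
    (A : Finset ℤ) (hA : IsLeadingTerm N S A)
    (a : Fin N → ℤ) (ha : StrictMono a) (haA : (↑A : Set ℤ) = Set.range a)
    (σ : Equiv.Perm (Fin N)) :
    IsMKdVTuple N (mkTuple N S a σ) ∧ mkTuple N S a σ ⟨N - 1, by omega⟩ = S := by
  obtain ⟨n, rfl⟩ : ∃ n, N = n + 1 := ⟨N - 1, by omega⟩
  refine ⟨⟨isKdV_mkTuple hS hA ha.injective haA σ, fun i => ?_⟩, mkTuple_last hA haA σ⟩
  induction i using Fin.lastCases with
  | last =>
    rw [Fin.last_add_one, mkTuple_last hA haA]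
    exact shiftSet_one_subset_mkTuple_zero σ
  | cast i =>
    rw [Fin.coeSucc_eq_succ]
    exact shiftSet_mkTuple_castSucc_subset σ i
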